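/- For m > 0 define k_m(z) := (1/2)·∫_0^∞ exp(−m²z²/(2v))·exp(−v/2) dv for z ≥ 0. Then k_m(0) = 1, 0 ≤ k_m(z) ≤ 1 for all z ≥ 0, and there exists a universal constant C > 0 such that for all m > 0, all r ≥ 0 and all ε ∈ (0,1]: 0 ≤ ∫_1^{1/ε} (1 − k_m(u·r)) · (1/u) du ≤ C·m·r/ε. Consequently, for the kernel H_ε(x,y) := ∫_1^{1/ε} k_m(u‖x−y‖) (1/u) du on ℝ^d, one has H_ε(x,x) = log(1/ε) and |H_ε(x,x) − H_ε(x,y)| ≤ C·m·‖x−y‖/ε. -/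

import Mathlib

open MeasureTheory intervalIntegral

noncomputable section

/-- `km m z = (1/2) ∫_0^∞ exp(−m²z²/(2v)) exp(−v/2) dv`. -/
def km (m z : ℝ) : ℝ :=
  (1 / 2) * ∫ v in Set.Ioi (0:ℝ), Real.exp (-(m ^ 2 * z ^ 2) / (2 * v)) * Real.exp (-v / 2)

/-- The integral cut-off kernel `H_ε(x,y) = ∫_1^{1/ε} k_m(u‖x−y‖) (1/u) du` on `ℝ^d`. -/
def Hker (d : ℕ) (m ε : ℝ) (x y : EuclideanSpace ℝ (Fin d)) : ℝ :=
  ∫ u in (1:ℝ)..(1 / ε), km m (u * ‖x - y‖) * (1 / u)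


/-!
Since `1 - exp (-x) ≤ √x` for `x ≥ 0`, the defect
`1 - k_m(z) = ½ ∫₀^∞ (1 - exp (-m²z²/(2v))) exp (-v/2) dv` is at most
`½ · (|mz|/√2) · ∫₀^∞ v^(-1/2) exp (-v/2) dv = (√π/2) |mz|`, by `Γ(1/2) = √π`.
So the integrand `(1 - k_m(ur))/u` of the cut-off integral is at most `(√π/2) m r` on
`[1, 1/ε]`, which gives the bound with `C = √π/2`. On the diagonal `k_m(0) = 1`, so
`H_ε(x,x) = ∫₁^{1/ε} du/u = log (1/ε)`.
-/

open Set Real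

lemma one_sub_exp_neg_le_sqrt {x : ℝ} (hx : 0 ≤ x) : 1 - exp (-x) ≤ √x := by
  rcases le_or_gt x 1 with h | h
  · calc 1 - exp (-x) ≤ x := by linarith [add_one_le_exp (-x)]
      _ ≤ √x := (le_sqrt hx hx).mpr (by nlinarith)
  · calc 1 - exp (-x) ≤ 1 := by linarith [exp_pos (-x)]
      _ ≤ √x := one_le_sqrt.mpr h.le

lemma integral_exp_neg_half_Ioi : ∫ v in Ioi (0:ℝ), exp (-v / 2) = 2 := by
  have h := integral_exp_mul_Ioi (a := -1 / 2) (by norm_num) 0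
  simp only [mul_zero, exp_zero] at h
  convert h using 1
  · congr 1; ext v; ring_nf
  · norm_num

lemma integrableOn_exp_neg_half_Ioi : IntegrableOn (fun v : ℝ => exp (-v / 2)) (Ioi 0) :=
  Integrable.of_integral_ne_zero (by rw [integral_exp_neg_half_Ioi]; norm_num)

lemma integral_rpow_neg_half_mul_exp_neg_half_Ioi :
    ∫ v in Ioi (0:ℝ), v ^ (-(1 / 2) : ℝ) * exp (-v / 2) = √2 * √π := by
  have h := integral_rpow_mul_exp_neg_mul_Ioi (a := 1 / 2) (r := 1 / 2) (by norm_num) (by norm_num)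
  rw [Gamma_one_half_eq, ← sqrt_eq_rpow] at h
  convert h using 1
  · refine setIntegral_congr_fun measurableSet_Ioi fun v _ => ?_
    ring_nf
  · norm_num

lemma exp_neg_div_mul_exp_neg_half_le {c v : ℝ} (hc : 0 ≤ c) (hv : 0 < v) :
    exp (-c / (2 * v)) * exp (-v / 2) ≤ exp (-v / 2) := by
  have hexp : exp (-c / (2 * v)) ≤ 1 :=
    exp_le_one_iff.mpr (div_nonpos_of_nonpos_of_nonneg (neg_nonpos.mpr hc) (by positivity))
  exact mul_le_of_le_one_left (exp_pos _).le hexp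

lemma integrableOn_exp_neg_div_mul_exp_neg_half {c : ℝ} (hc : 0 ≤ c) :
    IntegrableOn (fun v => exp (-c / (2 * v)) * exp (-v / 2)) (Ioi 0) := by
  refine integrableOn_exp_neg_half_Ioi.mono' (by fun_prop) ?_
  filter_upwards [ae_restrict_mem measurableSet_Ioi] with v hv
  rw [norm_of_nonneg (by positivity)]
  exact exp_neg_div_mul_exp_neg_half_le hc hv

lemma one_sub_exp_neg_div_mul_exp_neg_half_le {c v : ℝ} (hc : 0 ≤ c) (hv : 0 < v) :
    (1 - exp (-c / (2 * v))) * exp (-v / 2) ≤ √c / √2 * (v ^ (-(1 / 2) : ℝ) * exp (-v / 2)) := by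
  have hsqrt : √(c / (2 * v)) = √c / √2 * v ^ (-(1 / 2) : ℝ) := by
    rw [sqrt_div' _ (by positivity), sqrt_mul zero_le_two, rpow_neg hv.le, ← sqrt_eq_rpow]
    field_simp
  calc (1 - exp (-c / (2 * v))) * exp (-v / 2) ≤ √(c / (2 * v)) * exp (-v / 2) := by
        rw [neg_div]
        exact mul_le_mul_of_nonneg_right (one_sub_exp_neg_le_sqrt (by positivity)) (exp_pos _).le
    _ = _ := by rw [hsqrt]; ring

lemma km_zero (m : ℝ) : km m 0 = 1 := by
  simp [km, integral_exp_neg_half_Ioi]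

lemma km_nonneg (m z : ℝ) : 0 ≤ km m z :=
  mul_nonneg (by norm_num) (setIntegral_nonneg measurableSet_Ioi fun _ _ => by positivity)

lemma one_sub_km_eq (m z : ℝ) :
    1 - km m z =
      1 / 2 * ∫ v in Ioi (0:ℝ), (1 - exp (-(m ^ 2 * z ^ 2) / (2 * v))) * exp (-v / 2) := by
  simp_rw [sub_mul, one_mul]
  rw [integral_sub integrableOn_exp_neg_half_Ioi
    (integrableOn_exp_neg_div_mul_exp_neg_half (by positivity)), integral_exp_neg_half_Ioi, km]
  ring

lemma km_le_one (m z : ℝ) : km m z ≤ 1 := by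
  have hdefect : 0 ≤ 1 - km m z := by
    rw [one_sub_km_eq]
    refine mul_nonneg (by norm_num) (setIntegral_nonneg measurableSet_Ioi fun v hv => ?_)
    have hle := exp_neg_div_mul_exp_neg_half_le (by positivity : 0 ≤ m ^ 2 * z ^ 2) hv
    nlinarith
  linarith

lemma one_sub_km_le (m z : ℝ) : 1 - km m z ≤ √π / 2 * |m * z| := by
  have hc : 0 ≤ m ^ 2 * z ^ 2 := by positivity
  have hint : IntegrableOn (fun v : ℝ => v ^ (-(1 / 2) : ℝ) * exp (-v / 2)) (Ioi 0) :=
    Integrable.of_integral_ne_zero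
      (by rw [integral_rpow_neg_half_mul_exp_neg_half_Ioi]; positivity)
  have hbound := setIntegral_mono_on
    ((integrableOn_exp_neg_half_Ioi.sub (integrableOn_exp_neg_div_mul_exp_neg_half hc)).congr_fun
      (fun v _ => by simp only [Pi.sub_apply]; ring) measurableSet_Ioi)
    (hint.const_mul (√(m ^ 2 * z ^ 2) / √2)) measurableSet_Ioi
    fun v hv => one_sub_exp_neg_div_mul_exp_neg_half_le hc hv
  have hsqrt : √(m ^ 2 * z ^ 2) = |m * z| := by rw [← mul_pow, sqrt_sq_eq_abs]
  have hconst : |m * z| / √2 * (√2 * √π) = √π * |m * z| := by field_simp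
  rw [MeasureTheory.integral_const_mul, integral_rpow_neg_half_mul_exp_neg_half_Ioi, hsqrt,
    hconst] at hbound
  rw [one_sub_km_eq]
  linarith

lemma continuous_km (m : ℝ) : Continuous (km m) := by
  refine continuous_const.mul (continuous_of_dominated (fun z => by fun_prop) (fun z => ?_)
    integrableOn_exp_neg_half_Ioi ?_)
  · filter_upwards [ae_restrict_mem measurableSet_Ioi] with v hv
    rw [norm_of_nonneg (by positivity)]
    exact exp_neg_div_mul_exp_neg_half_le (by positivity) hv
  · exact ae_of_all _ fun v => by fun_prop

lemma intervalIntegrable_mul_one_div {f : ℝ → ℝ} (hf : Continuous f) {a b : ℝ} (ha : 0 < a)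
    (hb : 0 < b) : IntervalIntegrable (fun u => f u * (1 / u)) volume a b :=
  (hf.continuousOn.mul (continuousOn_const.div continuousOn_id fun _ hu =>
    (lt_min ha hb |>.trans_le hu.1).ne')).intervalIntegrable

lemma integral_one_sub_km_mul_one_div_nonneg (m r : ℝ) {ε : ℝ} (hε : ε ∈ Ioc (0:ℝ) 1) :
    0 ≤ ∫ u in (1:ℝ)..(1 / ε), (1 - km m (u * r)) * (1 / u) :=
  intervalIntegral.integral_nonneg (one_le_one_div hε.1 hε.2) fun _ hu =>
    mul_nonneg (sub_nonneg.mpr (km_le_one m _)) (one_div_nonneg.mpr (zero_le_one.trans hu.1))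

lemma integral_one_sub_km_mul_one_div_le {m r ε : ℝ} (hm : 0 ≤ m) (hr : 0 ≤ r)
    (hε : ε ∈ Ioc (0:ℝ) 1) :
    ∫ u in (1:ℝ)..(1 / ε), (1 - km m (u * r)) * (1 / u) ≤ √π / 2 * m * r / ε := by
  have hpointwise : ∀ u ∈ Icc (1:ℝ) (1 / ε), (1 - km m (u * r)) * (1 / u) ≤ √π / 2 * m * r := by
    intro u hu
    have hu0 : 0 < u := zero_lt_one.trans_le hu.1
    calc (1 - km m (u * r)) * (1 / u) ≤ √π / 2 * |m * (u * r)| * (1 / u) :=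
          mul_le_mul_of_nonneg_right (one_sub_km_le m _) (by positivity)
      _ = √π / 2 * m * r := by
          rw [abs_of_nonneg (by positivity)]; field_simp
  have hmono := intervalIntegral.integral_mono_on (one_le_one_div hε.1 hε.2)
    (intervalIntegrable_mul_one_div (continuous_const.sub ((continuous_km m).comp
      (continuous_mul_const r))) zero_lt_one (one_div_pos.mpr hε.1))
    intervalIntegrable_const hpointwise
  rw [intervalIntegral.integral_const, smul_eq_mul] at hmono
  calc _ ≤ (1 / ε - 1) * (√π / 2 * m * r) := hmono
    _ ≤ 1 / ε * (√π / 2 * m * r) := by gcongr; linarith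
    _ = √π / 2 * m * r / ε := by ring

lemma Hker_self (d : ℕ) (m : ℝ) {ε : ℝ} (hε : 0 < ε) (x : EuclideanSpace ℝ (Fin d)) :
    Hker d m ε x x = log (1 / ε) := by
  simp only [Hker, sub_self, norm_zero, mul_zero, km_zero, one_mul]
  rw [integral_one_div (notMem_uIcc_of_lt zero_lt_one (one_div_pos.mpr hε)), div_one]

lemma Hker_self_sub_Hker (d : ℕ) (m : ℝ) {ε : ℝ} (hε : 0 < ε)
    (x y : EuclideanSpace ℝ (Fin d)) :
    Hker d m ε x x - Hker d m ε x y =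
      ∫ u in (1:ℝ)..(1 / ε), (1 - km m (u * ‖x - y‖)) * (1 / u) := by
  have hint (r : ℝ) : IntervalIntegrable (fun u => km m (u * r) * (1 / u)) volume 1 (1 / ε) :=
    intervalIntegrable_mul_one_div ((continuous_km m).comp (continuous_mul_const r)) zero_lt_one
      (one_div_pos.mpr hε)
  rw [Hker, Hker, ← intervalIntegral.integral_sub (hint _) (hint _)]
  simp only [sub_self, norm_zero, mul_zero, km_zero, sub_mul]

theorem integral_cutoff_kernel_properties :
    ∃ C : ℝ, 0 < C ∧
      ∀ m : ℝ, 0 < m →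
        (km m 0 = 1) ∧
        (∀ z : ℝ, 0 ≤ z → 0 ≤ km m z ∧ km m z ≤ 1) ∧
        (∀ r : ℝ, 0 ≤ r → ∀ ε ∈ Set.Ioc (0:ℝ) 1,
          0 ≤ ∫ u in (1:ℝ)..(1 / ε), (1 - km m (u * r)) * (1 / u) ∧
          ∫ u in (1:ℝ)..(1 / ε), (1 - km m (u * r)) * (1 / u) ≤ C * m * r / ε) ∧
        (∀ d : ℕ, ∀ ε ∈ Set.Ioc (0:ℝ) 1, ∀ x y : EuclideanSpace ℝ (Fin d),
          Hker d m ε x x = Real.log (1 / ε) ∧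
          |Hker d m ε x x - Hker d m ε x y| ≤ C * m * ‖x - y‖ / ε) := by
  refine ⟨√π / 2, by positivity, fun m hm => ⟨km_zero m,
    fun z _ => ⟨km_nonneg m z, km_le_one m z⟩,
    fun r hr ε hε => ⟨integral_one_sub_km_mul_one_div_nonneg m r hε,
      integral_one_sub_km_mul_one_div_le hm.le hr hε⟩,
    fun d ε hε x y => ⟨Hker_self d m hε.1 x, ?_⟩⟩⟩
  rw [Hker_self_sub_Hker d m hε.1, abs_of_nonneg (integral_one_sub_km_mul_one_div_nonneg m _ hε)]
  exact integral_one_sub_km_mul_one_div_le hm.le (norm_nonneg _) hε
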